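/- Let G be a second-countable Hausdorff ample groupoid, R a unital commutative ring, A an R-algebra, and π : A_R(G) → A a ring homomorphism. Then π is injective if and only if the restriction of π to A_R(Iso(G)°) is injective, where Iso(G)° is the interior of the isotropy bundle Iso(G)={γ∈G : d(γ)=r(γ)} (an open subgroupoid of G, itself Hausdorff and ample) and A_R(Iso(G)°) is identified with the subalgebra of A_R(G) spanned by characteristic functions of compact open bisections contained in Iso(G)°. -/

import Mathlib

/-!
Suppose `π f = 0` with `f ≠ 0`. Translating `f` by a compact open bisection `B` on which `f` is
a nonzero constant gives `g = 1_{B⁻¹} * f` in the kernel, equal to that constant on the open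
set of units `d(B)`. For an open bisection `C`, an open set of units `U` can be shrunk so that
every arrow of `C` with source and range in it lies in `Iso(G)°`; since the support of `g` is
compact, finitely many such shrinkings handle all of it. For a compact open set of units
`V` inside the result, `1_V * g * 1_V` is a nonzero element of the kernel supported in
`Iso(G)°`.
-/

open Set Function

/-- A groupoid structure on a type `G`: a small category in which every morphism is
invertible, encoded with a total multiplication `mul` that is only meaningful on
composable pairs.  Here `d x = x⁻¹x` and `r x = xx⁻¹`, and a pair `(x, y)` is
composable exactly when `d x = r y`. -/
structure GroupoidStr (G : Type*) where
  mul : G → G → G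
  inv : G → G
  inv_inv : ∀ x, inv (inv x) = x
  /-- `x · d x = x` -/
  mul_d : ∀ x, mul x (mul (inv x) x) = x
  /-- `r x · x = x` -/
  r_mul : ∀ x, mul (mul x (inv x)) x = x
  /-- associativity on composable pairs -/
  assoc : ∀ x y z, mul (inv x) x = mul y (inv y) → mul (inv y) y = mul z (inv z) →
    mul (mul x y) z = mul x (mul y z)
  /-- `d (xy) = d y` for composable `x, y` -/
  d_comp : ∀ x y, mul (inv x) x = mul y (inv y) →
    mul (inv (mul x y)) (mul x y) = mul (inv y) y
  /-- `r (xy) = r x` for composable `x, y` -/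
  r_comp : ∀ x y, mul (inv x) x = mul y (inv y) →
    mul (mul x y) (inv (mul x y)) = mul x (inv x)
  /-- `(xy)⁻¹ = y⁻¹x⁻¹` for composable `x, y` -/
  inv_mul : ∀ x y, mul (inv x) x = mul y (inv y) → inv (mul x y) = mul (inv y) (inv x)
  /-- units are their own inverses -/
  unit_self_inv : ∀ x, inv (mul (inv x) x) = mul (inv x) x
  /-- units are idempotents -/
  unit_idem : ∀ x, mul (mul (inv x) x) (mul (inv x) x) = mul (inv x) x

namespace GroupoidStr

variable {G : Type*} (S : GroupoidStr G)

/-- The domain (source) `d x = x⁻¹ x` of `x`. -/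
def d (x : G) : G := S.mul (S.inv x) x

/-- The range `r x = x x⁻¹` of `x`. -/
def r (x : G) : G := S.mul x (S.inv x)

/-- The unit space `G⁰ = d(G) = r(G)`. -/
def unitSpace : Set G := Set.range S.d

/-- The isotropy bundle `Iso(G) = {x | d x = r x}`. -/
def IsoSet : Set G := {x | S.d x = S.r x}

/-- The orbit of a unit `u`: `{r γ : d γ = u}`. -/
def orbit (u : G) : Set G := S.r '' {γ : G | S.d γ = u}

/-- A subset `U` of the unit space is invariant if `d γ ∈ U` implies `r γ ∈ U`. -/
def IsInvariant (U : Set G) : Prop := ∀ γ : G, S.d γ ∈ U → S.r γ ∈ U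

section Top

variable [TopologicalSpace G]

/-- `G` is a topological groupoid: inversion and composition (on the set of composable
pairs, with the relative product topology) are continuous. -/
def IsTopological : Prop :=
  Continuous S.inv ∧
    Continuous fun p : {p : G × G // S.d p.1 = S.r p.2} => S.mul p.1.1 p.1.2

/-- An open bisection: an open set on which both `d` and `r` restrict to homeomorphisms
onto open subsets of the unit space. -/
def IsOpenBisection (U : Set G) : Prop :=
  IsOpen U ∧ Set.InjOn S.d U ∧ Set.InjOn S.r U ∧
    (∀ V ⊆ U, IsOpen V → IsOpen (S.d '' V)) ∧ (∀ V ⊆ U, IsOpen V → IsOpen (S.r '' V))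

/-- An étale groupoid: there is a basis of open bisections (equivalently, `d` is a local
homeomorphism). -/
def IsEtale : Prop := ∀ x : G, ∃ U, x ∈ U ∧ S.IsOpenBisection U

/-- An ample groupoid: there is a basis of compact open bisections. -/
def IsAmple : Prop :=
  ∀ (x : G) (W : Set G), x ∈ W → IsOpen W →
    ∃ U, x ∈ U ∧ U ⊆ W ∧ IsCompact U ∧ S.IsOpenBisection U

def IsCompactOpenBisection (U : Set G) : Prop := IsCompact U ∧ S.IsOpenBisection U

/-- `G` is effective if the interior of the isotropy bundle is the unit space. -/
def IsEffective : Prop := interior S.IsoSet = S.unitSpace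

variable (R : Type*) [CommRing R]

/-- The underlying set of the Steinberg algebra `A_R(G)`: locally constant,
compactly supported `R`-valued functions on `G`.  (The groupoid structure argument is
only used for the `A_R(G)` notation `S.SteinSet R`.) -/
def SteinSet (_Sg : GroupoidStr G) : Set (G → R) :=
  {f | IsLocallyConstant f ∧ HasCompactSupport f}

variable {R}

/-- Convolution: `(f * g) γ = ∑_{αβ = γ} f α * g β`. -/
noncomputable def conv (f g : G → R) : G → R := fun γ =>
  ∑ᶠ p ∈ {p : G × G | S.d p.1 = S.r p.2 ∧ S.mul p.1 p.2 = γ}, f p.1 * g p.2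

end Top

end GroupoidStr

open Filter Topology

namespace GroupoidStr

variable {G : Type*} (S : GroupoidStr G)

theorem d_inv (x : G) : S.d (S.inv x) = S.r x := by
  simp [d, r, S.inv_inv]

theorem r_inv (x : G) : S.r (S.inv x) = S.d x := by
  simp [d, r, S.inv_inv]

theorem d_d (x : G) : S.d (S.d x) = S.d x := by
  simp only [d]
  rw [S.unit_self_inv]
  exact S.unit_idem x

theorem r_d (x : G) : S.r (S.d x) = S.d x := by
  simp only [r, d]
  rw [S.unit_self_inv]
  exact S.unit_idem x

theorem d_r (x : G) : S.d (S.r x) = S.r x := by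
  rw [← S.d_inv, d_d]

theorem d_mem_unitSpace (x : G) : S.d x ∈ S.unitSpace := ⟨x, rfl⟩

theorem d_eq_self_of_mem_unitSpace {u : G} (hu : u ∈ S.unitSpace) : S.d u = u := by
  obtain ⟨x, rfl⟩ := hu
  exact S.d_d x

theorem r_eq_self_of_mem_unitSpace {u : G} (hu : u ∈ S.unitSpace) : S.r u = u := by
  obtain ⟨x, rfl⟩ := hu
  exact S.r_d x

theorem r_mul_of_d_eq_r {x y : G} (h : S.d x = S.r y) : S.r (S.mul x y) = S.r x :=
  S.r_comp x y h

theorem inv_mul_cancel_left {x y : G} (h : S.d x = S.r y) :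
    S.mul (S.inv x) (S.mul x y) = y := by
  rw [← S.assoc (S.inv x) x y (S.d_inv x) h]
  change S.mul (S.d x) y = y
  rw [h]
  exact S.r_mul y

theorem mul_inv_cancel_left {x y : G} (h : S.r x = S.r y) :
    S.mul x (S.mul (S.inv x) y) = y := by
  simpa [S.inv_inv] using S.inv_mul_cancel_left (x := S.inv x) (by rwa [S.d_inv])

variable {S} {R : Type*} [CommRing R]

theorem conv_apply_of_unique {f g : G → R} {γ α β : G} (hαβ : S.d α = S.r β)
    (hγ : S.mul α β = γ)
    (huniq : ∀ α' β', S.d α' = S.r β' → S.mul α' β' = γ → f α' * g β' ≠ 0 →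
      α' = α ∧ β' = β) :
    S.conv f g γ = f α * g β := by
  rw [conv, finsum_mem_inter_support_eq _ _ {(α, β)}, finsum_mem_singleton]
  ext ⟨α', β'⟩
  simp only [mem_inter_iff, mem_ofPred_eq, mem_support, mem_singleton_iff, Prod.mk.injEq]
  constructor
  · rintro ⟨⟨hcomp, hmul⟩, hne⟩
    exact ⟨huniq α' β' hcomp hmul hne, hne⟩
  · rintro ⟨⟨rfl, rfl⟩, hne⟩
    exact ⟨⟨hαβ, hγ⟩, hne⟩

theorem conv_indicator_one_right {V : Set G} (hV : V ⊆ S.unitSpace) (k : G → R) :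
    S.conv k (V.indicator 1) = (S.d ⁻¹' V).indicator k := by
  funext γ
  rw [conv_apply_of_unique (α := γ) (β := S.d γ) (S.r_d γ).symm (S.mul_d γ)]
  · by_cases h : S.d γ ∈ V <;> simp [h]
  · intro α β hαβ hγ hne
    have hβ : β ∈ V := mem_of_indicator_ne_zero (right_ne_zero_of_mul hne)
    obtain rfl : β = S.d α := by rw [hαβ, S.r_eq_self_of_mem_unitSpace (hV hβ)]
    obtain rfl : α = γ := (S.mul_d α).symm.trans hγ
    exact ⟨rfl, rfl⟩

theorem conv_indicator_one_left {V : Set G} (hV : V ⊆ S.unitSpace) (k : G → R) :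
    S.conv (V.indicator 1) k = (S.r ⁻¹' V).indicator k := by
  funext γ
  rw [conv_apply_of_unique (α := S.r γ) (β := γ) (S.d_r γ) (S.r_mul γ)]
  · by_cases h : S.r γ ∈ V <;> simp [h]
  · intro α β hαβ hγ hne
    have hα : α ∈ V := mem_of_indicator_ne_zero (left_ne_zero_of_mul hne)
    obtain rfl : α = S.r β := by rw [← hαβ, S.d_eq_self_of_mem_unitSpace (hV hα)]
    obtain rfl : β = γ := (S.r_mul β).symm.trans hγ
    exact ⟨rfl, rfl⟩

theorem conv_indicator_inv_image_apply_of_mem {B : Set G} (hB : InjOn S.d B) (f : G → R)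
    {γ b : G} (hb : b ∈ B) (hdb : S.d b = S.r γ) :
    S.conv ((S.inv '' B).indicator 1) f γ = f (S.mul b γ) := by
  have hcomp : S.d (S.inv b) = S.r (S.mul b γ) := by
    rw [S.d_inv, S.r_mul_of_d_eq_r hdb]
  rw [conv_apply_of_unique hcomp (S.inv_mul_cancel_left hdb),
    indicator_of_mem (mem_image_of_mem _ hb), Pi.one_apply, one_mul]
  rintro α β hαβ hγ hne
  obtain ⟨b', hb', rfl⟩ := mem_of_indicator_ne_zero (left_ne_zero_of_mul hne)
  obtain rfl : b' = b := hB hb' hb <| by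
    rw [hdb, ← hγ, S.r_mul_of_d_eq_r hαβ, S.r_inv]
  refine ⟨rfl, ?_⟩
  rw [← hγ, S.mul_inv_cancel_left (by rw [← S.d_inv, hαβ])]

theorem conv_indicator_inv_image_apply_of_notMem {B : Set G} (f : G → R) {γ : G}
    (hγ : S.r γ ∉ S.d '' B) : S.conv ((S.inv '' B).indicator 1) f γ = 0 := by
  refine finsum_mem_eq_zero_of_forall_eq_zero ?_
  rintro ⟨α, β⟩ ⟨hαβ, hmul⟩
  by_cases hα : α ∈ S.inv '' B
  · obtain ⟨b, hb, rfl⟩ := hα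
    refine (hγ ⟨b, hb, ?_⟩).elim
    rw [← hmul, S.r_mul_of_d_eq_r hαβ, S.r_inv]
  · simp [indicator_of_notMem hα]

variable [TopologicalSpace G]

theorem IsTopological.continuousOn_mul (hTop : S.IsTopological) {X : Type*}
    [TopologicalSpace X] {a b : X → G} {s : Set X} (ha : ContinuousOn a s)
    (hb : ContinuousOn b s) (hab : ∀ x ∈ s, S.d (a x) = S.r (b x)) :
    ContinuousOn (fun x => S.mul (a x) (b x)) s := by
  rw [continuousOn_iff_continuous_domRestrict] at ha hb ⊢
  exact hTop.2.comp ((ha.prodMk hb).subtype_mk fun x => hab x x.2)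

theorem IsTopological.continuous_d (hTop : S.IsTopological) : Continuous S.d :=
  continuousOn_univ.1 <| hTop.continuousOn_mul hTop.1.continuousOn continuousOn_id
    fun x _ => S.d_inv x

theorem IsTopological.continuous_r (hTop : S.IsTopological) : Continuous S.r :=
  continuousOn_univ.1 <| hTop.continuousOn_mul continuousOn_id hTop.1.continuousOn
    fun x _ => (S.r_inv x).symm

theorem IsTopological.isClosed_composable [T2Space G] (hTop : S.IsTopological) :
    IsClosed {p : G × G | S.d p.1 = S.r p.2} :=
  isClosed_eq (hTop.continuous_d.comp continuous_fst) (hTop.continuous_r.comp continuous_snd)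

theorem IsTopological.isOpen_inv_image (hTop : S.IsTopological) {B : Set G} (hB : IsOpen B) :
    IsOpen (S.inv '' B) := by
  rw [image_eq_preimage_of_inverse S.inv_inv S.inv_inv]
  exact hB.preimage hTop.1

theorem IsAmple.isEtale (hAmple : S.IsAmple) : S.IsEtale := fun x =>
  let ⟨U, hxU, _, _, hU⟩ := hAmple x univ trivial isOpen_univ
  ⟨U, hxU, hU⟩

theorem IsOpenBisection.isOpen_d_image {C : Set G} (hC : S.IsOpenBisection C) :
    IsOpen (S.d '' C) :=
  hC.2.2.2.1 C subset_rfl hC.1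

theorem IsOpenBisection.continuousOn_invFunOn [Nonempty G] {C : Set G}
    (hC : S.IsOpenBisection C) : ContinuousOn (invFunOn S.d C) (S.d '' C) := by
  have hinv : ∀ c ∈ C, invFunOn S.d C (S.d c) = c := fun c hc => hC.2.1.leftInvOn_invFunOn hc
  rw [continuousOn_iff]
  rintro _ ⟨c, hc, rfl⟩ t ht hct
  refine ⟨S.d '' (t ∩ C), hC.2.2.2.1 _ inter_subset_right (ht.inter hC.1),
    ⟨c, ⟨by rwa [← hinv c hc], hc⟩, rfl⟩, ?_⟩
  rintro _ ⟨⟨c', ⟨hc't, hc'C⟩, rfl⟩, -⟩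
  rwa [mem_preimage, hinv c' hc'C]

/-- `γ ↦ b γ` for the unique `b ∈ B` with `d b = r γ`. -/
theorem IsOpenBisection.continuousOn_mul_invFunOn [Nonempty G] (hTop : S.IsTopological)
    {B : Set G} (hB : S.IsOpenBisection B) :
    ContinuousOn (fun γ => S.mul (invFunOn S.d B (S.r γ)) γ) (S.r ⁻¹' (S.d '' B)) :=
  hTop.continuousOn_mul (hB.continuousOn_invFunOn.comp hTop.continuous_r.continuousOn
    (mapsTo_preimage _ _)) continuousOn_id fun _ hγ => invFunOn_eq hγ

/-- Either `C ∩ d⁻¹(U)` is an open subset of `Iso(G)`, or it contains an arrow `γ` with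
`d γ ≠ r γ`, and separating `d γ` from `r γ` yields a `U'` that no arrow of `C` both leaves
and enters. -/
theorem IsOpenBisection.exists_isOpen_subset_inter_subset_interior_isoSet [T2Space G]
    (hTop : S.IsTopological) {C : Set G} (hC : S.IsOpenBisection C) {U : Set G}
    (hU : IsOpen U) (hne : U.Nonempty) :
    ∃ U' ⊆ U, IsOpen U' ∧ U'.Nonempty ∧
      C ∩ S.d ⁻¹' U' ∩ S.r ⁻¹' U' ⊆ interior S.IsoSet := by
  by_cases hiso : C ∩ S.d ⁻¹' U ⊆ S.IsoSet
  · exact ⟨U, subset_rfl, hU, hne, fun x hx =>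
      interior_maximal hiso (hC.1.inter (hU.preimage hTop.continuous_d)) hx.1⟩
  obtain ⟨γ, ⟨hγC, hγU⟩, hγ⟩ := not_subset.1 hiso
  obtain ⟨P, Q, hP, hQ, hdP, hrQ, hPQ⟩ := t2_separation hγ
  set N := C ∩ S.d ⁻¹' (U ∩ P) ∩ S.r ⁻¹' Q
  have hN : IsOpen N := (hC.1.inter ((hU.inter hP).preimage hTop.continuous_d)).inter
    (hQ.preimage hTop.continuous_r)
  refine ⟨S.d '' N, ?_, hC.2.2.2.1 N (fun x hx => hx.1.1) hN,
    ⟨S.d γ, γ, ⟨⟨hγC, hγU, hdP⟩, hrQ⟩, rfl⟩, ?_⟩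
  · rintro _ ⟨x, hx, rfl⟩
    exact hx.1.2.1
  · rintro x ⟨⟨hxC, y, hy, hyx⟩, z, hz, hzx⟩
    obtain rfl : y = x := hC.2.1 hy.1.1 hxC hyx
    exact (disjoint_left.1 hPQ (hzx ▸ hz.1.2.2) hy.2).elim

theorem exists_isOpen_subset_biUnion_inter_subset_interior_isoSet [T2Space G]
    (hTop : S.IsTopological) {ι : Type*} (t : Finset ι) {C : ι → Set G}
    (hC : ∀ i ∈ t, S.IsOpenBisection (C i)) {U : Set G} (hU : IsOpen U) (hne : U.Nonempty) :
    ∃ U' ⊆ U, IsOpen U' ∧ U'.Nonempty ∧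
      (⋃ i ∈ t, C i) ∩ S.d ⁻¹' U' ∩ S.r ⁻¹' U' ⊆ interior S.IsoSet := by
  classical
  induction t using Finset.induction_on generalizing U with
  | empty => exact ⟨U, subset_rfl, hU, hne, by simp⟩
  | insert a t _ ih =>
    obtain ⟨U₁, hU₁U, hU₁, hne₁, hU₁a⟩ :=
      (hC a (t.mem_insert_self a)).exists_isOpen_subset_inter_subset_interior_isoSet hTop hU hne
    obtain ⟨U₂, hU₂U₁, hU₂, hne₂, hU₂t⟩ :=
      ih (fun i hi => hC i (Finset.mem_insert_of_mem hi)) hU₁ hne₁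
    refine ⟨U₂, hU₂U₁.trans hU₁U, hU₂, hne₂, ?_⟩
    rintro x ⟨⟨hxC, hdx⟩, hrx⟩
    rw [Finset.set_biUnion_insert] at hxC
    rcases hxC with hxa | hxt
    · exact hU₁a ⟨⟨hxa, hU₂U₁ hdx⟩, hU₂U₁ hrx⟩
    · exact hU₂t ⟨⟨hxt, hdx⟩, hrx⟩

theorem exists_isOpen_subset_inter_subset_interior_isoSet [T2Space G]
    (hTop : S.IsTopological) (hEtale : S.IsEtale) {K : Set G} (hK : IsCompact K)
    {U : Set G} (hU : IsOpen U) (hne : U.Nonempty) :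
    ∃ U' ⊆ U, IsOpen U' ∧ U'.Nonempty ∧
      K ∩ S.d ⁻¹' U' ∩ S.r ⁻¹' U' ⊆ interior S.IsoSet := by
  choose C hxC hC using hEtale
  obtain ⟨t, hKt⟩ := hK.elim_finite_subcover C (fun x => (hC x).1)
    fun x _ => mem_iUnion.2 ⟨x, hxC x⟩
  obtain ⟨U', hU'U, hU', hne', hU'C⟩ :=
    exists_isOpen_subset_biUnion_inter_subset_interior_isoSet hTop t (fun x _ => hC x) hU hne
  exact ⟨U', hU'U, hU', hne', fun x ⟨⟨hxK, hdx⟩, hrx⟩ => hU'C ⟨⟨hKt hxK, hdx⟩, hrx⟩⟩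

theorem hasCompactSupport_conv [T2Space G] (hTop : S.IsTopological) {f g : G → R}
    (hf : HasCompactSupport f) (hg : HasCompactSupport g) : HasCompactSupport (S.conv f g) := by
  have hK : IsCompact (Subtype.val ⁻¹' (tsupport f ×ˢ tsupport g) :
      Set {p : G × G // S.d p.1 = S.r p.2}) :=
    hTop.isClosed_composable.isClosedEmbedding_subtypeVal.isCompact_preimage (hf.prod hg)
  refine HasCompactSupport.intro (hK.image hTop.2) fun γ hγ => ?_
  by_contra hne
  obtain ⟨p, ⟨hcomp, hmul⟩, hp⟩ := exists_ne_zero_of_finsum_mem_ne_zero hne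
  exact hγ ⟨⟨p, hcomp⟩, ⟨subset_tsupport _ (left_ne_zero_of_mul hp),
    subset_tsupport _ (right_ne_zero_of_mul hp)⟩, hmul⟩

theorem isLocallyConstant_conv_indicator_inv_image [T2Space G] (hTop : S.IsTopological)
    {B : Set G} (hBc : IsCompact B) (hB : S.IsOpenBisection B) {f : G → R}
    (hf : IsLocallyConstant f) : IsLocallyConstant (S.conv ((S.inv '' B).indicator 1) f) := by
  refine (IsLocallyConstant.iff_eventually_eq _).2 fun γ => ?_
  have : Nonempty G := ⟨γ⟩
  by_cases hγ : S.r γ ∈ S.d '' B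
  · have hO : S.r ⁻¹' (S.d '' B) ∈ 𝓝 γ :=
      (hB.isOpen_d_image.preimage hTop.continuous_r).mem_nhds hγ
    have hf' := ((hB.continuousOn_mul_invFunOn hTop).continuousAt hO).eventually
      ((IsLocallyConstant.iff_eventually_eq f).1 hf _)
    filter_upwards [hO, hf'] with γ' hγ' hfγ'
    rwa [conv_indicator_inv_image_apply_of_mem hB.2.1 f (invFunOn_mem hγ') (invFunOn_eq hγ'),
      conv_indicator_inv_image_apply_of_mem hB.2.1 f (invFunOn_mem hγ) (invFunOn_eq hγ)]
  · have hO : S.r ⁻¹' (S.d '' B)ᶜ ∈ 𝓝 γ := ((hBc.image hTop.continuous_d).isClosed.isOpen_compl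
      |>.preimage hTop.continuous_r).mem_nhds hγ
    filter_upwards [hO] with γ' hγ'
    rw [conv_indicator_inv_image_apply_of_notMem f hγ',
      conv_indicator_inv_image_apply_of_notMem f hγ]

variable (S) in
theorem zero_mem_steinSet : (0 : G → R) ∈ S.SteinSet R :=
  ⟨IsLocallyConstant.const 0, HasCompactSupport.zero⟩

theorem sub_mem_steinSet {f g : G → R} (hf : f ∈ S.SteinSet R) (hg : g ∈ S.SteinSet R) :
    f - g ∈ S.SteinSet R :=
  ⟨hf.1.sub hg.1, hf.2.sub hg.2⟩

theorem indicator_mem_steinSet {U : Set G} (hU : IsClopen U) {k : G → R}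
    (hk : k ∈ S.SteinSet R) : U.indicator k ∈ S.SteinSet R :=
  ⟨(LocallyConstant.indicator ⟨k, hk.1⟩ hU).isLocallyConstant,
    hk.2.mono <| by rw [support_indicator]; exact inter_subset_right⟩

variable (S) in
theorem indicator_one_mem_steinSet [T2Space G] {U : Set G} (hUc : IsCompact U)
    (hUo : IsOpen U) : U.indicator 1 ∈ S.SteinSet R :=
  ⟨(LocallyConstant.indicator 1 ⟨hUc.isClosed, hUo⟩).isLocallyConstant,
    HasCompactSupport.intro hUc fun _ hx => indicator_of_notMem hx _⟩

theorem conv_indicator_inv_image_mem_steinSet [T2Space G] (hTop : S.IsTopological) {B : Set G}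
    (hBc : IsCompact B) (hB : S.IsOpenBisection B) {f : G → R} (hf : f ∈ S.SteinSet R) :
    S.conv ((S.inv '' B).indicator 1) f ∈ S.SteinSet R :=
  ⟨isLocallyConstant_conv_indicator_inv_image hTop hBc hB hf.1, hasCompactSupport_conv hTop
    (S.indicator_one_mem_steinSet (hBc.image hTop.1) (hTop.isOpen_inv_image hB.1)).2 hf.2⟩

theorem conv_indicator_one_left_mem_steinSet [T2Space G] (hTop : S.IsTopological) {V : Set G}
    (hVc : IsCompact V) (hVo : IsOpen V) (hV : V ⊆ S.unitSpace) {k : G → R}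
    (hk : k ∈ S.SteinSet R) : S.conv (V.indicator 1) k ∈ S.SteinSet R := by
  rw [conv_indicator_one_left hV]
  exact indicator_mem_steinSet (IsClopen.preimage ⟨hVc.isClosed, hVo⟩ hTop.continuous_r) hk

theorem conv_indicator_one_right_mem_steinSet [T2Space G] (hTop : S.IsTopological) {V : Set G}
    (hVc : IsCompact V) (hVo : IsOpen V) (hV : V ⊆ S.unitSpace) {k : G → R}
    (hk : k ∈ S.SteinSet R) : S.conv k (V.indicator 1) ∈ S.SteinSet R := by
  rw [conv_indicator_one_right hV]
  exact indicator_mem_steinSet (IsClopen.preimage ⟨hVc.isClosed, hVo⟩ hTop.continuous_d) hk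

theorem exists_ne_zero_mem_support_subset_interior_isoSet [T2Space G] (hTop : S.IsTopological)
    (hAmple : S.IsAmple) {I : Set (G → R)} (hI : I ⊆ S.SteinSet R)
    (hI_inv : ∀ B, IsCompact B → S.IsOpenBisection B → ∀ f ∈ I,
      S.conv ((S.inv '' B).indicator 1) f ∈ I)
    (hI_unit : ∀ V, IsCompact V → IsOpen V → V ⊆ S.unitSpace → ∀ f ∈ I,
      S.conv (V.indicator 1) f ∈ I ∧ S.conv f (V.indicator 1) ∈ I)
    {f : G → R} (hf : f ∈ I) (hf0 : f ≠ 0) :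
    ∃ h ∈ I, h ≠ 0 ∧ ∀ x, h x ≠ 0 → x ∈ interior S.IsoSet := by
  obtain ⟨γ₀, hγ₀⟩ := Function.ne_iff.1 hf0
  obtain ⟨B, hγ₀B, hBf, hBc, hB⟩ :=
    hAmple γ₀ {x | f x = f γ₀} rfl ((hI hf).1.isOpen_fiber (f γ₀))
  set g := S.conv ((S.inv '' B).indicator 1) f with hg_def
  have hg : g ∈ I := hI_inv B hBc hB f hf
  have hgB : ∀ u ∈ S.d '' B, g u = f γ₀ := by
    rintro _ ⟨b, hb, rfl⟩
    rw [hg_def, conv_indicator_inv_image_apply_of_mem hB.2.1 f hb (S.r_d b).symm]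
    exact (congrArg f (S.mul_d b)).trans (hBf hb)
  obtain ⟨U, hUB, hU, ⟨u, hu⟩, hUiso⟩ := exists_isOpen_subset_inter_subset_interior_isoSet hTop
    hAmple.isEtale (hI hg).2 hB.isOpen_d_image ⟨S.d γ₀, mem_image_of_mem _ hγ₀B⟩
  obtain ⟨V, huV, hVU, hVc, hV⟩ := hAmple u U hu hU
  have hVunit : V ⊆ S.unitSpace := fun v hv => by
    obtain ⟨b, -, rfl⟩ := hUB (hVU hv)
    exact S.d_mem_unitSpace b
  refine ⟨_, (hI_unit V hVc hV.1 hVunit _ (hI_unit V hVc hV.1 hVunit g hg).2).1, ?_, ?_⟩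
  all_goals rw [conv_indicator_one_right hVunit, conv_indicator_one_left hVunit]
  · have hu' := hVunit huV
    refine Function.ne_iff.2 ⟨u, ?_⟩
    rw [indicator_of_mem (by rwa [mem_preimage, S.r_eq_self_of_mem_unitSpace hu']),
      indicator_of_mem (by rwa [mem_preimage, S.d_eq_self_of_mem_unitSpace hu']), hgB u (hUB hu)]
    exact hγ₀
  · intro x hx
    have hrx : x ∈ S.r ⁻¹' V := mem_of_indicator_ne_zero hx
    rw [indicator_of_mem hrx] at hx
    have hdx : x ∈ S.d ⁻¹' V := mem_of_indicator_ne_zero hx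
    rw [indicator_of_mem hdx] at hx
    exact hUiso ⟨⟨subset_tsupport g hx, hVU hdx⟩, hVU hrx⟩

theorem exists_ne_zero_map_eq_zero_support_subset_interior_isoSet [T2Space G]
    (hTop : S.IsTopological) (hAmple : S.IsAmple) {A : Type*} [MulZeroClass A]
    {π : (G → R) → A}
    (hmul : ∀ f ∈ S.SteinSet R, ∀ g ∈ S.SteinSet R, π (S.conv f g) = π f * π g)
    {f : G → R} (hf : f ∈ S.SteinSet R) (hπf : π f = 0) (hf0 : f ≠ 0) :
    ∃ h ∈ S.SteinSet R, π h = 0 ∧ h ≠ 0 ∧ ∀ x, h x ≠ 0 → x ∈ interior S.IsoSet := by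
  set I := {f ∈ S.SteinSet R | π f = 0}
  have hI_inv : ∀ B, IsCompact B → S.IsOpenBisection B → ∀ f ∈ I,
      S.conv ((S.inv '' B).indicator 1) f ∈ I := by
    rintro B hBc hB f ⟨hf, hπf⟩
    have h1 := S.indicator_one_mem_steinSet (R := R) (hBc.image hTop.1)
      (hTop.isOpen_inv_image hB.1)
    exact ⟨conv_indicator_inv_image_mem_steinSet hTop hBc hB hf,
      by rw [hmul _ h1 _ hf, hπf, mul_zero]⟩
  have hI_unit : ∀ V, IsCompact V → IsOpen V → V ⊆ S.unitSpace → ∀ f ∈ I,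
      S.conv (V.indicator 1) f ∈ I ∧ S.conv f (V.indicator 1) ∈ I := by
    rintro V hVc hVo hV f ⟨hf, hπf⟩
    have h1 := S.indicator_one_mem_steinSet (R := R) hVc hVo
    exact ⟨⟨conv_indicator_one_left_mem_steinSet hTop hVc hVo hV hf,
        by rw [hmul _ h1 _ hf, hπf, mul_zero]⟩,
      ⟨conv_indicator_one_right_mem_steinSet hTop hVc hVo hV hf,
        by rw [hmul _ hf _ h1, hπf, zero_mul]⟩⟩
  obtain ⟨h, ⟨hh, hπh⟩, hh0, hhiso⟩ := exists_ne_zero_mem_support_subset_interior_isoSet hTop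
    hAmple (fun _ hf => hf.1) hI_inv hI_unit ⟨hf, hπf⟩ hf0
  exact ⟨h, hh, hπh, hh0, hhiso⟩

end GroupoidStr

theorem injOn_of_forall_map_eq_zero {M N : Type*} [AddGroup M] [AddGroup N] {s : Set M}
    {π : M → N} (hs : ∀ x ∈ s, ∀ y ∈ s, x - y ∈ s)
    (hadd : ∀ x ∈ s, ∀ y ∈ s, π (x + y) = π x + π y) (hker : ∀ x ∈ s, π x = 0 → x = 0) :
    InjOn π s := by
  intro x hx y hy hxy
  have hsum := hadd _ (hs x hx y hy) y hy
  rw [sub_add_cancel, hxy, right_eq_add] at hsum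
  exact sub_eq_zero.1 (hker _ (hs x hx y hy) hsum)

theorem steinberg_uniqueness_general {G : Type*} [TopologicalSpace G]
    (S : GroupoidStr G) [T2Space G]
    (hTop : S.IsTopological) (hAmple : S.IsAmple)
    {R : Type*} [CommRing R] {A : Type*} [Ring A]
    (π : (G → R) → A)
    (hadd : ∀ f ∈ S.SteinSet R, ∀ g ∈ S.SteinSet R, π (f + g) = π f + π g)
    (hmul : ∀ f ∈ S.SteinSet R, ∀ g ∈ S.SteinSet R, π (S.conv f g) = π f * π g) :
    Set.InjOn π (S.SteinSet R) ↔
      Set.InjOn π {f ∈ S.SteinSet R | ∀ x : G, f x ≠ 0 → x ∈ interior S.IsoSet} := by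
  refine ⟨fun hinj => hinj.mono fun f hf => hf.1, fun hinj => ?_⟩
  have hzero := S.zero_mem_steinSet (R := R)
  have hπ0 : π 0 = 0 := by simpa using hadd 0 hzero 0 hzero
  refine injOn_of_forall_map_eq_zero (fun f hf g hg => GroupoidStr.sub_mem_steinSet hf hg) hadd
    fun f hf hπf => by_contra fun hf0 => ?_
  obtain ⟨h, hh, hπh, hh0, hhiso⟩ :=
    S.exists_ne_zero_map_eq_zero_support_subset_interior_isoSet hTop hAmple hmul hf hπf hf0
  exact hh0 (hinj ⟨hh, hhiso⟩ ⟨hzero, fun _ hx => (hx rfl).elim⟩ (hπh.trans hπ0.symm))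

/-- Uniqueness theorem, `[CEP, Theorem 3.1]`. Let `G` be a
second-countable Hausdorff ample groupoid, `R` a unital commutative ring, `A` an
`R`-algebra and `π : A_R(G) → A` a ring homomorphism.  Then `π` is injective iff its
restriction to `A_R(Iso(G)°)` — the subalgebra of functions supported in the interior
of the isotropy bundle — is injective. -/
theorem steinberg_uniqueness {G : Type*} [TopologicalSpace G]
    (S : GroupoidStr G) [T2Space G] [SecondCountableTopology G]
    (hTop : S.IsTopological) (hAmple : S.IsAmple)
    {R : Type*} [CommRing R] {A : Type*} [Ring A] [Algebra R A]
    (π : (G → R) → A)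
    (hadd : ∀ f ∈ S.SteinSet R, ∀ g ∈ S.SteinSet R, π (f + g) = π f + π g)
    (hmul : ∀ f ∈ S.SteinSet R, ∀ g ∈ S.SteinSet R, π (S.conv f g) = π f * π g) :
    Set.InjOn π (S.SteinSet R) ↔
      Set.InjOn π {f ∈ S.SteinSet R | ∀ x : G, f x ≠ 0 → x ∈ interior S.IsoSet} :=
  steinberg_uniqueness_general S hTop hAmple π hadd hmul
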